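/- Fix integers 1 ≤ ℓ ≤ k and n ≥ 1. For every randomized rank-based online algorithm A that accepts at most k of n arrivals and every ε > 0, there exists an injective vector of nonnegative reals v : {1,…,n} → ℝ_{≥0} such that, when σ is a uniformly random permutation of {1,…,n} and w_i = v(σ(i)), the accepted set S satisfies E[TOP_ℓ(S; w)] ≤ ( (1 + 1/n)·(1 − e^{−k}) + ε ) · TOP_ℓ(v). -/

import Mathlib

/-!
Give the maximum value `1` and all other values at most `δ`; then `TOP_ℓ(S; w)` is, up to `nδ`,
the indicator that `S` contains the maximum, so it suffices to bound the probability `P` that a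
rank-based algorithm accepts the maximum.

Let `a i` be the probability that arrival `i` is accepted while being a maximum of the first
`i + 1` arrivals. This event depends only on the relative order of those arrivals, whereas the set
of their values is independent of that order (adjacent transpositions of values move between
the possible sets). Hence the maximum is among them, and so at `i`, with conditional probability
`(i + 1) / n`, and `P = ∑ (i + 1) a i / n`. The constraints `(i + 1) a i ≤ 1` and `∑ a i ≤ k`
bound the sum by `(n + 1) (1 - e^{-k})`, by induction on `n`.
-/

open MeasureTheory Finset

/-- `TOPval ℓ A v` is the maximum of `∑ i ∈ B, v i` over `B ⊆ A` with `|B| ≤ ℓ`. -/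
noncomputable def TOPval {n : ℕ} (ℓ : ℕ) (A : Finset (Fin n)) (v : Fin n → ℝ) : ℝ :=
  ((A.powerset.filter fun B => B.card ≤ ℓ).image fun B => ∑ i ∈ B, v i).max'
    (Finset.Nonempty.image
      ⟨∅, Finset.mem_filter.mpr ⟨Finset.empty_mem_powerset A, by simp⟩⟩ _)

/-- A randomized rank-based online algorithm with capacity `k`: it receives a uniform random
seed `u ∈ [0,1]` and the arrival sequence `w`, outputs a set of at most `k` arrivals, its
decision about arrival `i` depends only on the seed and the relative order of `w₁,…,wᵢ`
(which also makes it online), and it is measurable in the seed. -/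
structure RankAlg (n k : ℕ) where
  run : ℝ → (Fin n → ℝ) → Finset (Fin n)
  card_le : ∀ u w, (run u w).card ≤ k
  rankBased : ∀ u (w w' : Fin n → ℝ) (i : Fin n),
    (∀ j j' : Fin n, j ≤ i → j' ≤ i → (w j < w j' ↔ w' j < w' j')) →
    (i ∈ run u w ↔ i ∈ run u w')
  meas : ∀ (i : Fin n) (w : Fin n → ℝ), MeasurableSet {u : ℝ | i ∈ run u w}


open Equiv Real
open scoped Nat

/-- `hxy` says that `x` and `y` are adjacent: no `c` lies strictly between them. -/
theorem Equiv.swap_lt_swap_iff {α : Type*} [LinearOrder α] {x y a b : α}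
    (hxy : ∀ c, c ≠ x → c ≠ y → (c < x ↔ c < y)) (ha : a ≠ y) (hb : b ≠ y) :
    swap x y a < swap x y b ↔ a < b := by
  have hyx : ∀ c, c ≠ x → c ≠ y → (x < c ↔ y < c) := fun c hx hy => by
    rw [← not_le, ← not_le, le_iff_lt_or_eq, le_iff_lt_or_eq, hxy c hx hy]
    simp [hx, hy]
  rcases eq_or_ne a b with rfl | hab
  · simp
  rcases eq_or_ne a x with rfl | hax
  · rw [swap_apply_left, swap_apply_of_ne_of_ne hab.symm hb, hyx b hab.symm hb]
  rcases eq_or_ne b x with rfl | hbx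
  · rw [swap_apply_left, swap_apply_of_ne_of_ne hax ha, hxy a hax ha]
  rw [swap_apply_of_ne_of_ne hax ha, swap_apply_of_ne_of_ne hbx hb]

section DependsOnOrderOn

variable {n : ℕ}

def DependsOnOrderOn (P : Finset (Fin n)) (p : Perm (Fin n) → Prop) : Prop :=
  ∀ σ τ : Perm (Fin n), (∀ j ∈ P, ∀ j' ∈ P, (σ j < σ j' ↔ τ j < τ j')) → (p σ ↔ p τ)

variable {P : Finset (Fin n)} {p : Perm (Fin n) → Prop} [DecidablePred p]

/-- If exactly one of the adjacent values `x`, `y` is taken on `P`, exchanging them does not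
change the relative order on `P`. -/
theorem DependsOnOrderOn.card_filter_inv_mem_eq_of_adjacent (hp : DependsOnOrderOn P p)
    {x y : Fin n} (hxy : ∀ c, c ≠ x → c ≠ y → (c < x ↔ c < y)) :
    #{σ | p σ ∧ σ⁻¹ x ∈ P} = #{σ | p σ ∧ σ⁻¹ y ∈ P} := by
  have swap_le : ∀ {x y : Fin n}, (∀ c, c ≠ x → c ≠ y → (c < x ↔ c < y)) →
      #{σ | p σ ∧ σ⁻¹ x ∈ P ∧ σ⁻¹ y ∉ P} ≤ #{σ | p σ ∧ σ⁻¹ y ∈ P ∧ σ⁻¹ x ∉ P} := by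
    intro x y hxy
    refine card_le_card_of_injOn (swap x y * ·) (fun σ hσ => ?_)
      (mul_right_injective _).injOn
    simp only [coe_filter, mem_univ, true_and, Set.mem_ofPred_eq] at hσ ⊢
    obtain ⟨hpσ, hx, hy⟩ := hσ
    have hne : ∀ j ∈ P, σ j ≠ y := fun j hj hjy => hy (by rwa [Perm.inv_eq_iff_eq.2 hjy.symm])
    refine ⟨(hp _ _ fun j hj j' hj' => ?_).1 hpσ, by simpa [swap_inv], by simpa [swap_inv]⟩
    exact (swap_lt_swap_iff hxy (hne j hj) (hne j' hj')).symm
  have split : ∀ x y : Fin n, #{σ | p σ ∧ σ⁻¹ x ∈ P} =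
      #{σ | p σ ∧ σ⁻¹ x ∈ P ∧ σ⁻¹ y ∈ P} + #{σ | p σ ∧ σ⁻¹ x ∈ P ∧ σ⁻¹ y ∉ P} := by
    intro x y
    rw [← card_filter_add_card_filter_not (s := {σ | p σ ∧ σ⁻¹ x ∈ P}) (fun σ => σ⁻¹ y ∈ P),
      filter_filter, filter_filter]
    simp only [and_assoc]
  have hboth :
      #{σ | p σ ∧ σ⁻¹ x ∈ P ∧ σ⁻¹ y ∈ P} = #{σ | p σ ∧ σ⁻¹ y ∈ P ∧ σ⁻¹ x ∈ P} := by
    congr 1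
    ext σ
    simp only [mem_filter]
    tauto
  have := swap_le hxy
  have := swap_le fun c hy hx => (hxy c hx hy).symm
  rw [split x y, split y x]
  omega

theorem DependsOnOrderOn.card_filter_inv_mem_eq (hp : DependsOnOrderOn P p) (x y : Fin n) :
    #{σ | p σ ∧ σ⁻¹ x ∈ P} = #{σ | p σ ∧ σ⁻¹ y ∈ P} := by
  suffices h : ∀ m (hm : m < n),
      #{σ | p σ ∧ σ⁻¹ ⟨m, hm⟩ ∈ P} = #{σ | p σ ∧ σ⁻¹ ⟨0, by omega⟩ ∈ P} from
    (h x x.2).trans (h y y.2).symm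
  intro m hm
  induction m with
  | zero => rfl
  | succ m ih =>
    rw [← ih (by omega)]
    refine (hp.card_filter_inv_mem_eq_of_adjacent fun c hx hy => ?_).symm
    simp only [ne_eq, Fin.ext_iff, Fin.lt_def] at hx hy ⊢
    omega

theorem DependsOnOrderOn.mul_card_filter_inv_mem (hp : DependsOnOrderOn P p) (x : Fin n) :
    n * #{σ | p σ ∧ σ⁻¹ x ∈ P} = #P * #{σ | p σ} := by
  calc n * #{σ | p σ ∧ σ⁻¹ x ∈ P}
      = ∑ y, #{σ | p σ ∧ σ⁻¹ y ∈ P} := by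
        rw [sum_congr rfl fun y _ => hp.card_filter_inv_mem_eq y x, sum_const, card_univ,
          Fintype.card_fin, smul_eq_mul]
    _ = ∑ σ with p σ, #{y | σ⁻¹ y ∈ P} := by
        simp only [card_filter, sum_filter]
        rw [sum_comm]
        simp only [ite_and]
        exact sum_congr rfl fun σ _ => by split_ifs <;> simp
    _ = #P * #{σ | p σ} := by
        rw [mul_comm, ← smul_eq_mul, ← sum_const]
        refine sum_congr rfl fun σ _ => ?_
        rw [← card_map σ.toEmbedding (s := P)]
        congr 1
        ext y
        simp

end DependsOnOrderOn

theorem mul_card_perm_apply_eq {n : ℕ} (i t : Fin n) :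
    n * #{σ : Perm (Fin n) | σ i = t} = n ! := by
  have h := DependsOnOrderOn.mul_card_filter_inv_mem (P := {i}) (p := fun _ => True)
    (fun _ _ _ => Iff.rfl) t
  simp only [true_and, mem_singleton, Perm.inv_eq_iff_eq, card_singleton, one_mul,
    filter_true, card_univ, Fintype.card_perm, Fintype.card_fin] at h
  simpa only [eq_comm (a := t)] using h

theorem mul_one_sub_add_mul_le {N c x : ℝ} (hN : 0 ≤ N) (hc0 : 0 ≤ c) (hc1 : c ≤ 1)
    (hx : 0 ≤ x) (hNx : N * x ≤ 1) :
    N * (1 - c) + N * x ≤ (N + 1) * (1 - c * exp (-x)) := by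
  have hexp : exp (-x) * (1 + x) ≤ 1 := by
    calc exp (-x) * (1 + x) ≤ exp (-x) * exp x :=
          mul_le_mul_of_nonneg_left (by linarith [add_one_le_exp x]) (exp_nonneg _)
      _ = 1 := by rw [← exp_add, neg_add_cancel, exp_zero]
  have key : (N + 1) * c ≤ (1 + N * c - N * x) * (1 + x) := by
    nlinarith [mul_nonneg (sub_nonneg.2 hc1) (sub_nonneg.2 hNx), mul_nonneg hx (sub_nonneg.2 hNx)]
  nlinarith [mul_le_mul_of_nonneg_left hexp (by positivity : 0 ≤ (N + 1) * c)]

theorem sum_succ_mul_le_succ_mul_one_sub_exp {m : ℕ} (a : Fin m → ℝ) (ha0 : ∀ i, 0 ≤ a i)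
    (ha1 : ∀ i : Fin m, ((i : ℕ) + 1 : ℝ) * a i ≤ 1) :
    ∑ i : Fin m, ((i : ℕ) + 1 : ℝ) * a i ≤ (m + 1) * (1 - exp (-∑ i, a i)) := by
  induction m with
  | zero => simp
  | succ m ih =>
    have ih := ih (fun i => a i.castSucc) (fun i => ha0 _) (fun i => by simpa using ha1 i.castSucc)
    have hstep := mul_one_sub_add_mul_le (N := m + 1) (c := exp (-∑ i : Fin m, a i.castSucc))
      (by positivity) (exp_nonneg _) (exp_le_one_iff.2 (by simpa using sum_nonneg fun i _ => ha0 _))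
      (ha0 (Fin.last m)) (by simpa using ha1 (Fin.last m))
    rw [Fin.sum_univ_castSucc, Fin.sum_univ_castSucc, neg_add, exp_add]
    push_cast
    simp only [Fin.val_castSucc] at ih ⊢
    linarith

section TOPval

variable {n ℓ : ℕ} {A : Finset (Fin n)} {v : Fin n → ℝ}

theorem sum_le_TOPval {B : Finset (Fin n)} (hBA : B ⊆ A) (hB : #B ≤ ℓ) :
    ∑ i ∈ B, v i ≤ TOPval ℓ A v := by
  unfold TOPval
  exact le_max' _ _ (mem_image_of_mem (fun B => ∑ i ∈ B, v i)
    (mem_filter.2 ⟨mem_powerset.2 hBA, hB⟩))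

theorem TOPval_nonneg : 0 ≤ TOPval ℓ A v := by
  simpa using sum_le_TOPval (v := v) (ℓ := ℓ) (empty_subset A) (by simp)

theorem TOPval_le_sum (hv : ∀ i ∈ A, 0 ≤ v i) : TOPval ℓ A v ≤ ∑ i ∈ A, v i := by
  unfold TOPval
  refine max'_le _ _ _ fun x hx => ?_
  obtain ⟨B, hB, rfl⟩ := mem_image.1 hx
  exact sum_le_sum_of_subset_of_nonneg (mem_powerset.1 (mem_filter.1 hB).1) fun i hi _ => hv i hi

end TOPval

theorem setIntegral_Icc_le_of_le {f : ℝ → ℝ} {C : ℝ} (hf0 : ∀ u, 0 ≤ f u) (hfC : ∀ u, f u ≤ C) :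
    ∫ u in Set.Icc (0 : ℝ) 1, f u ≤ C := by
  have h := norm_setIntegral_le_of_norm_le_const (μ := volume) (s := Set.Icc (0 : ℝ) 1)
    (by simp) fun u _ => (Real.norm_of_nonneg (hf0 u)).trans_le (hfC u)
  simpa using (le_abs_self _).trans h

theorem exists_strictMono_apply_top_eq_one {n : ℕ} {t : Fin n} (ht : IsTop t) {δ : ℝ}
    (hδ0 : 0 < δ) (hδ1 : δ < 1) :
    ∃ v : Fin n → ℝ, StrictMono v ∧ (∀ i, 0 ≤ v i) ∧ v t = 1 ∧ ∀ i ≠ t, v i ≤ δ := by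
  refine ⟨fun i => δ ^ ((t : ℕ) - i), fun i j hij => ?_, fun i => by positivity, by simp,
    fun i hi => pow_le_of_le_one hδ0.le hδ1.le ?_⟩
  · have := Fin.le_def.1 (ht j)
    exact pow_lt_pow_right_of_lt_one₀ hδ0 hδ1 (by omega)
  · have := Fin.le_def.1 (ht i)
    have := Fin.val_ne_of_ne hi
    omega

theorem sum_comp_perm_le {n : ℕ} {v : Fin n → ℝ} {t : Fin n} {δ : ℝ} (hδ : 0 ≤ δ)
    (hvt : v t ≤ 1) (hv : ∀ i ≠ t, v i ≤ δ) (σ : Perm (Fin n)) (S : Finset (Fin n)) :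
    ∑ j ∈ S, v (σ j) ≤ (if σ⁻¹ t ∈ S then 1 else 0) + n * δ := by
  calc ∑ j ∈ S, v (σ j) ≤ ∑ j ∈ S, ((if σ⁻¹ t = j then 1 else 0) + δ) := by
        refine sum_le_sum fun j _ => ?_
        split_ifs with h
        · have hσj : σ j = t := by rw [← h]; simp
          linarith [hσj ▸ hvt]
        · simpa using hv (σ j) fun h' => h (by rw [← h']; simp)
    _ = (if σ⁻¹ t ∈ S then 1 else 0) + #S * δ := by
        rw [sum_add_distrib, sum_ite_eq, sum_const, nsmul_eq_mul]
    _ ≤ (if σ⁻¹ t ∈ S then 1 else 0) + n * δ := by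
        gcongr
        simpa using card_le_univ S

namespace RankAlg

variable {n k : ℕ} (A : RankAlg n k) (u : ℝ)

/-- The run of `A` when the `j`-th arrival has rank `σ j`. -/
def runPerm (σ : Perm (Fin n)) : Finset (Fin n) :=
  A.run u fun j => ((σ j : ℕ) : ℝ)

theorem run_comp_eq_runPerm {v : Fin n → ℝ} (hv : StrictMono v) (σ : Perm (Fin n)) :
    A.run u (fun j => v (σ j)) = A.runPerm u σ := by
  ext i
  exact A.rankBased u _ _ i fun j j' _ _ => by rw [hv.lt_iff_lt, Nat.cast_lt, Fin.val_fin_lt]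

theorem mem_runPerm_iff_of_lt_iff {σ τ : Perm (Fin n)} {i : Fin n}
    (h : ∀ j j', j ≤ i → j' ≤ i → (σ j < σ j' ↔ τ j < τ j')) :
    i ∈ A.runPerm u σ ↔ i ∈ A.runPerm u τ :=
  A.rankBased u _ _ i fun j j' hj hj' => by
    simpa only [Nat.cast_lt, Fin.val_fin_lt] using h j j' hj hj'

theorem dependsOnOrderOn_accept_prefixMax (i : Fin n) :
    DependsOnOrderOn (Iic i) fun σ => i ∈ A.runPerm u σ ∧ ∀ j < i, σ j < σ i := by
  intro σ τ h
  simp only [mem_Iic] at h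
  dsimp only
  rw [A.mem_runPerm_iff_of_lt_iff u fun j j' hj hj' => h j hj j' hj']
  exact and_congr_right' (forall₂_congr fun j hj => h j hj.le i le_rfl)

theorem mul_card_accept_top_eq {t : Fin n} (ht : IsTop t) (i : Fin n) :
    n * #{σ | i ∈ A.runPerm u σ ∧ σ i = t} =
      (i + 1) * #{σ | i ∈ A.runPerm u σ ∧ ∀ j < i, σ j < σ i} := by
  rw [← Fin.card_Iic, ← (A.dependsOnOrderOn_accept_prefixMax u i).mul_card_filter_inv_mem t]
  congr 2
  ext σ
  simp only [mem_filter, mem_univ, true_and, mem_Iic]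
  constructor
  · rintro ⟨hi, rfl⟩
    refine ⟨⟨hi, fun j hj => lt_of_le_of_ne (ht _) (σ.injective.ne hj.ne)⟩, ?_⟩
    simp
  · rintro ⟨⟨hi, hmax⟩, hle⟩
    obtain hlt | heq := hle.lt_or_eq
    · exact absurd (hmax _ hlt) (by simpa using ht (σ i))
    · exact ⟨hi, by rw [← heq]; simp⟩

theorem mul_card_accepts_top_eq_sum {t : Fin n} (ht : IsTop t) :
    n * #{σ | σ⁻¹ t ∈ A.runPerm u σ} =
      ∑ i : Fin n, (i + 1) * #{σ | i ∈ A.runPerm u σ ∧ ∀ j < i, σ j < σ i} := by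
  rw [card_eq_sum_card_fiberwise (f := (·⁻¹ t)) (t := univ) fun _ _ => mem_coe.2 (mem_univ _),
    mul_sum]
  refine sum_congr rfl fun i _ => ?_
  rw [← A.mul_card_accept_top_eq u ht i, filter_filter]
  congr 2
  ext σ
  simp only [mem_filter, mem_univ, true_and]
  constructor
  · rintro ⟨hi, rfl⟩
    simpa using hi
  · rintro ⟨hi, rfl⟩
    simpa using hi

theorem succ_mul_card_accept_prefixMax_le {t : Fin n} (ht : IsTop t) (i : Fin n) :
    (i + 1) * #{σ | i ∈ A.runPerm u σ ∧ ∀ j < i, σ j < σ i} ≤ n ! := by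
  rw [← A.mul_card_accept_top_eq u ht i, ← mul_card_perm_apply_eq i t]
  exact Nat.mul_le_mul_left n (card_le_card (monotone_filter_right _ fun σ _ h => h.2))

theorem sum_card_mem_runPerm_le : ∑ i, #{σ | i ∈ A.runPerm u σ} ≤ n ! * k := by
  calc ∑ i, #{σ | i ∈ A.runPerm u σ} = ∑ σ, #(A.runPerm u σ) := by
        simpa [bipartiteAbove, bipartiteBelow] using
          sum_card_bipartiteAbove_eq_sum_card_bipartiteBelow (s := univ) (t := univ)
            fun i σ => i ∈ A.runPerm u σ
    _ ≤ ∑ _σ : Perm (Fin n), k := sum_le_sum fun σ _ => A.card_le u _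
    _ = n ! * k := by simp [Fintype.card_perm]

theorem card_accepts_top_le {t : Fin n} (ht : IsTop t) :
    (#{σ | σ⁻¹ t ∈ A.runPerm u σ} : ℝ) ≤ n ! * ((1 + 1 / n) * (1 - exp (-k))) := by
  have hn : (0 : ℝ) < n := by exact_mod_cast Fin.pos t
  set R : Fin n → ℕ := fun i => #{σ | i ∈ A.runPerm u σ ∧ ∀ j < i, σ j < σ i}
  set a : Fin n → ℝ := fun i => R i / (n ! : ℝ)
  have ha1 : ∀ i : Fin n, ((i : ℕ) + 1 : ℝ) * a i ≤ 1 := fun i => by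
    rw [mul_div_assoc', div_le_one (by positivity)]
    exact_mod_cast A.succ_mul_card_accept_prefixMax_le u ht i
  have hsum : ∑ i, a i ≤ k := by
    have h : ∑ i, R i ≤ n ! * k :=
      (sum_le_sum fun i _ => card_le_card (monotone_filter_right _ fun σ _ h => h.1)).trans
        (A.sum_card_mem_runPerm_le u)
    rw [← sum_div, div_le_iff₀ (by positivity), mul_comm]
    exact_mod_cast h
  rw [← mul_le_mul_iff_right₀ hn]
  calc (n * #{σ | σ⁻¹ t ∈ A.runPerm u σ} : ℝ) = ∑ i : Fin n, ((i : ℕ) + 1 : ℝ) * R i := by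
        exact_mod_cast A.mul_card_accepts_top_eq_sum u ht
    _ = n ! * ∑ i : Fin n, ((i : ℕ) + 1 : ℝ) * a i := by
        rw [mul_sum]
        refine sum_congr rfl fun i _ => ?_
        simp only [a]
        field_simp
    _ ≤ n ! * ((n + 1) * (1 - exp (-k))) := by
        gcongr
        refine (sum_succ_mul_le_succ_mul_one_sub_exp a (fun i => by positivity) ha1).trans ?_
        gcongr
    _ = n * (n ! * ((1 + 1 / n) * (1 - exp (-k)))) := by
        field_simp

theorem average_TOPval_le {ℓ : ℕ} {v : Fin n → ℝ} (hv : StrictMono v) (hv0 : ∀ i, 0 ≤ v i)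
    {t : Fin n} (ht : IsTop t) {δ : ℝ} (hδ : 0 ≤ δ) (hvt : v t ≤ 1) (hvδ : ∀ i ≠ t, v i ≤ δ) :
    (n ! : ℝ)⁻¹ * ∑ σ : Perm (Fin n), TOPval ℓ (A.run u fun i => v (σ i)) (fun i => v (σ i)) ≤
      (1 + 1 / n) * (1 - exp (-k)) + n * δ := by
  calc (n ! : ℝ)⁻¹ * ∑ σ : Perm (Fin n), TOPval ℓ (A.run u fun i => v (σ i)) (fun i => v (σ i))
      ≤ (n ! : ℝ)⁻¹ * ∑ σ : Perm (Fin n),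
          ((if σ⁻¹ t ∈ A.runPerm u σ then 1 else 0) + n * δ) := by
        gcongr with σ
        rw [← A.run_comp_eq_runPerm u hv]
        exact (TOPval_le_sum fun i _ => hv0 _).trans (sum_comp_perm_le hδ hvt hvδ σ _)
    _ = (n ! : ℝ)⁻¹ * #{σ | σ⁻¹ t ∈ A.runPerm u σ} + n * δ := by
        rw [sum_add_distrib, sum_boole, sum_const, card_univ, Fintype.card_perm, Fintype.card_fin,
          nsmul_eq_mul, mul_add, ← mul_assoc, inv_mul_cancel₀ (by positivity), one_mul]
    _ ≤ (1 + 1 / n) * (1 - exp (-k)) + n * δ := by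
        gcongr ?_ + _
        rw [inv_mul_le_iff₀ (by positivity)]
        exact A.card_accepts_top_le u ht

end RankAlg

theorem secretary_impossibility_general (n k ℓ : ℕ) (hn : 1 ≤ n) (hℓ : 1 ≤ ℓ)
    (Alg : RankAlg n k) (ε : ℝ) (hε : 0 < ε) :
    ∃ v : Fin n → ℝ, Function.Injective v ∧ (∀ i, 0 ≤ v i) ∧
      (∫ u in Set.Icc (0 : ℝ) 1, ((n.factorial : ℝ))⁻¹ *
          ∑ σ : Equiv.Perm (Fin n),
            TOPval ℓ (Alg.run u (fun i => v (σ i))) (fun i => v (σ i))) ≤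
        ((1 + 1 / (n : ℝ)) * (1 - Real.exp (-(k : ℝ))) + ε) * TOPval ℓ Finset.univ v := by
  obtain ⟨t, ht⟩ : ∃ t : Fin n, IsTop t :=
    ⟨⟨n - 1, by omega⟩, fun i => Fin.le_def.2 (Nat.le_sub_one_of_lt i.2)⟩
  have hn' : (0 : ℝ) < n := by exact_mod_cast hn
  set δ := min (ε / n) (1 / 2)
  have hδ0 : 0 < δ := by positivity
  have hδε : n * δ ≤ ε := by
    have : δ ≤ ε / n := min_le_left _ _
    rwa [le_div_iff₀ hn', mul_comm] at this
  obtain ⟨v, hv, hv0, hvt, hvδ⟩ :=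
    exists_strictMono_apply_top_eq_one ht hδ0 ((min_le_right _ _).trans_lt (by norm_num))
  refine ⟨v, hv.injective, hv0, ?_⟩
  have hTOP : 1 ≤ TOPval ℓ univ v := by
    simpa [hvt] using sum_le_TOPval (v := v) (subset_univ {t}) (by simpa using hℓ)
  have hC : 0 ≤ (1 + 1 / (n : ℝ)) * (1 - exp (-(k : ℝ))) + ε :=
    add_nonneg (mul_nonneg (by positivity) (sub_nonneg.2 (exp_le_one_iff.2 (by simp)))) hε.le
  calc _ ≤ (1 + 1 / (n : ℝ)) * (1 - exp (-(k : ℝ))) + ε :=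
        setIntegral_Icc_le_of_le
          (fun u => mul_nonneg (by positivity) (sum_nonneg fun σ _ => TOPval_nonneg))
          fun u => (Alg.average_TOPval_le u hv hv0 ht hδ0.le hvt.le hvδ).trans (by linarith)
    _ ≤ _ := le_mul_of_one_le_right hC hTOP

/-- **ℓ-out-of-k secretary impossibility (Theorem 3.6 of Ezra–Feldman–Nehama).**
For every randomized rank-based online algorithm `A` accepting at most `k` of `n` arrivals
and every `ε > 0`, there is an injective nonnegative value vector `v` such that, under a
uniformly random arrival order, the accepted set `S` satisfies
`E[TOP_ℓ(S; w)] ≤ ((1 + 1/n)·(1 − e^{−k}) + ε) · TOP_ℓ(v)`. -/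
theorem secretary_impossibility (n k ℓ : ℕ) (hn : 1 ≤ n) (hℓ : 1 ≤ ℓ) (hℓk : ℓ ≤ k)
    (Alg : RankAlg n k) (ε : ℝ) (hε : 0 < ε) :
    ∃ v : Fin n → ℝ, Function.Injective v ∧ (∀ i, 0 ≤ v i) ∧
      (∫ u in Set.Icc (0 : ℝ) 1, ((n.factorial : ℝ))⁻¹ *
          ∑ σ : Equiv.Perm (Fin n),
            TOPval ℓ (Alg.run u (fun i => v (σ i))) (fun i => v (σ i))) ≤
        ((1 + 1 / (n : ℝ)) * (1 - Real.exp (-(k : ℝ))) + ε) * TOPval ℓ Finset.univ v :=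
  secretary_impossibility_general n k ℓ hn hℓ Alg ε hε
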